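/- arXiv:2307.16329 — 2 statements merged into one kernel-verified Lean document; each statement's English description precedes it below -/
import Mathlib

section
/- For any ρ ∈ P(G), the two definitions of tangent space coincide: T¹_ρP(G) (the closure of gradient fields in ‖·‖_ρ) equals T²_ρP(G) = Π_ρ(𝕊ⁿˣⁿ), where Π_ρ(w) is the element of minimal ‖·‖_ρ-norm among velocity representatives {v : div_ρ(w − v) = 0}. -/
/-!
A field `v` with `Skew v` is determined, as far as its divergence goes, by its pairings
`(v, ∇φ)_ρ` with gradients (discrete integration by parts). If `v` is a `‖·‖_ρ`-limit of
gradients and `w` has the same divergence, then `‖v‖²_ρ - ‖w‖²_ρ = ‖v - ∇φ‖²_ρ - ‖w - ∇φ‖²_ρ`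
for every `φ`, which can be made arbitrarily small, so `v` has minimal norm. Conversely, if `v`
has minimal norm, let `∇φ` be its orthogonal projection onto the gradient fields: then `∇φ` has
the same divergence as `v`, and `‖v - ∇φ‖²_ρ = ‖v‖²_ρ - ‖∇φ‖²_ρ ≤ 0`.
-/

open Finset MeasureTheory

/-- The probability simplex `P(G)`. -/
def IsProb {n : ℕ} (ρ : Fin n → ℝ) : Prop := (∀ i, 0 ≤ ρ i) ∧ ∑ i, ρ i = 1

/-- Skew-symmetric matrices `𝕊^{n×n}`. -/
def Skew {n : ℕ} (v : Fin n → Fin n → ℝ) : Prop := ∀ i j, v i j = - v j i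

/-- The weighted inner product `(v,w)_ρ = (1/2) ∑_{(i,j)∈E} g(ρ_i,ρ_j) v_{ij} w_{ij}`. -/
noncomputable def gInner {n : ℕ} (ω : Fin n → Fin n → ℝ) (g : ℝ → ℝ → ℝ)
    (ρ : Fin n → ℝ) (v w : Fin n → Fin n → ℝ) : ℝ :=
  (1/2) * ∑ i, ∑ j, (if ω i j ≠ 0 then g (ρ i) (ρ j) * v i j * w i j else 0)

/-- The graph gradient `(∇_G φ)_{ij} = √ω_{ij} (φ_i - φ_j)`. -/
noncomputable def gradG {n : ℕ} (ω : Fin n → Fin n → ℝ) (φ : Fin n → ℝ) :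
    Fin n → Fin n → ℝ :=
  fun i j => Real.sqrt (ω i j) * (φ i - φ j)

/-- The graph divergence `⟨div_ρ(v)⟩_i = ∑_{j∈N(i)} √ω_{ij} g(ρ_i,ρ_j) v_{ji}`. -/
noncomputable def gdiv {n : ℕ} (ω : Fin n → Fin n → ℝ) (g : ℝ → ℝ → ℝ)
    (ρ : Fin n → ℝ) (v : Fin n → Fin n → ℝ) : Fin n → ℝ :=
  fun i => ∑ j, Real.sqrt (ω i j) * g (ρ i) (ρ j) * v j i

/-- The euclidean pairing on `ℝ^n`. -/
def dotl2 {n : ℕ} (a b : Fin n → ℝ) : ℝ := ∑ i, a i * b i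

/-- The tangent space `T¹_ρ P(G)`: the `‖·‖_ρ`-closure of gradient fields
in the skew-symmetric matrices. -/
def T1 {n : ℕ} (ω : Fin n → Fin n → ℝ) (g : ℝ → ℝ → ℝ) (ρ : Fin n → ℝ) :
    Set (Fin n → Fin n → ℝ) :=
  {v | Skew v ∧ ∀ ε > (0:ℝ), ∃ φ : Fin n → ℝ,
    gInner ω g ρ (v - gradG ω φ) (v - gradG ω φ) < ε}

/-- The tangent space `T²_ρ P(G) = Π_ρ(𝕊ⁿˣⁿ)`: skew-symmetric fields of minimal
`‖·‖_ρ`-norm within their own divergence class. -/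
def T2 {n : ℕ} (ω : Fin n → Fin n → ℝ) (g : ℝ → ℝ → ℝ) (ρ : Fin n → ℝ) :
    Set (Fin n → Fin n → ℝ) :=
  {u | Skew u ∧ ∀ v : Fin n → Fin n → ℝ, Skew v →
    gdiv ω g ρ v = gdiv ω g ρ u → gInner ω g ρ u u ≤ gInner ω g ρ v v}

variable {n : ℕ}

lemma skew_gradG {ω : Fin n → Fin n → ℝ} (hω : ∀ i j, ω i j = ω j i) (φ : Fin n → ℝ) :
    Skew (gradG ω φ) :=
  fun i j => by simp only [gradG, hω i j]; ring

noncomputable def gradGLinear (ω : Fin n → Fin n → ℝ) :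
    (Fin n → ℝ) →ₗ[ℝ] Fin n → Fin n → ℝ where
  toFun := gradG ω
  map_add' φ ψ := by funext i j; simp only [gradG, Pi.add_apply]; ring
  map_smul' c φ := by
    funext i j; simp only [gradG, Pi.smul_apply, smul_eq_mul, RingHom.id_apply]; ring

section DivergenceDuality

variable {ω : Fin n → Fin n → ℝ} {g : ℝ → ℝ → ℝ} (ρ : Fin n → ℝ)

/-- Discrete integration by parts. The `ω i j ≠ 0` guard in `gInner` is harmless because
`√(ω i j) = 0` kills the same terms in `gdiv`. -/
lemma gInner_gradG (hω : ∀ i j, ω i j = ω j i) (hg : ∀ s t, g s t = g t s)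
    {v : Fin n → Fin n → ℝ} (hv : Skew v) (φ : Fin n → ℝ) :
    gInner ω g ρ v (gradG ω φ) = - dotl2 (gdiv ω g ρ v) φ := by
  set a : Fin n → Fin n → ℝ := fun i j => g (ρ i) (ρ j) * Real.sqrt (ω i j) * v i j
  have ha : ∀ i j, a j i = - a i j := fun i j => by simp only [a, hg (ρ j), hω j i, hv j i]; ring
  have hterm : ∀ i j, (if ω i j ≠ 0 then g (ρ i) (ρ j) * v i j * gradG ω φ i j else 0) =
      a i j * φ i - a i j * φ j := fun i j => by
    by_cases h : ω i j = 0
    · simp only [a, gradG, h, Real.sqrt_zero, ne_eq, not_true_eq_false, if_false]; ring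
    · simp only [a, gradG, h, ne_eq, not_false_eq_true, if_true]; ring
  have hswap : ∑ i, ∑ j, a i j * φ j = - ∑ i, ∑ j, a i j * φ i := by
    rw [sum_comm, ← sum_neg_distrib]
    refine sum_congr rfl fun i _ => ?_
    rw [← sum_neg_distrib]
    exact sum_congr rfl fun j _ => by rw [ha]; ring
  have hdiv : dotl2 (gdiv ω g ρ v) φ = - ∑ i, ∑ j, a i j * φ i := by
    simp only [dotl2, gdiv, sum_mul, ← sum_neg_distrib]
    refine sum_congr rfl fun i _ => sum_congr rfl fun j _ => ?_
    simp only [a, hv j i]; ring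
  simp only [gInner, hterm, sum_sub_distrib, hswap, hdiv]
  ring

lemma gdiv_eq_gdiv_iff (hω : ∀ i j, ω i j = ω j i) (hg : ∀ s t, g s t = g t s)
    {u v : Fin n → Fin n → ℝ} (hu : Skew u) (hv : Skew v) :
    gdiv ω g ρ u = gdiv ω g ρ v ↔
      ∀ φ, gInner ω g ρ u (gradG ω φ) = gInner ω g ρ v (gradG ω φ) := by
  simp only [gInner_gradG ρ hω hg hu, gInner_gradG ρ hω hg hv, neg_inj]
  refine ⟨fun h φ => by rw [h], fun h => funext fun i => ?_⟩
  simpa [dotl2, Pi.single_apply] using h (Pi.single i 1)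

end DivergenceDuality

section WeightedInner

variable (ω : Fin n → Fin n → ℝ) (g : ℝ → ℝ → ℝ) (ρ : Fin n → ℝ)

noncomputable def weightedEmbedding :
    (Fin n → Fin n → ℝ) →ₗ[ℝ] EuclideanSpace ℝ (Fin n × Fin n) where
  toFun v := WithLp.toLp 2 fun p =>
    (if ω p.1 p.2 ≠ 0 then Real.sqrt (g (ρ p.1) (ρ p.2)) else 0) * v p.1 p.2
  map_add' u v := by ext p; simp [mul_add]
  map_smul' c v := by ext p; simp [mul_left_comm]

lemma gInner_zero_left (w : Fin n → Fin n → ℝ) : gInner ω g ρ 0 w = 0 := by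
  simp [gInner]

variable {g}

lemma gInner_eq_inner (hg : ∀ s t, 0 ≤ g s t) (v w : Fin n → Fin n → ℝ) :
    gInner ω g ρ v w =
      inner ℝ (weightedEmbedding ω g ρ v) (weightedEmbedding ω g ρ w) / 2 := by
  rw [gInner, PiLp.inner_apply, Fintype.sum_prod_type, one_div_mul_eq_div]
  congr 1
  refine sum_congr rfl fun i _ => sum_congr rfl fun j _ => ?_
  simp only [weightedEmbedding, LinearMap.coe_mk, AddHom.coe_mk, PiLp.toLp_apply,
    RCLike.inner_apply, conj_trivial]
  split_ifs
  · linear_combination (-(v i j * w i j)) * Real.mul_self_sqrt (hg (ρ i) (ρ j))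
  · ring

lemma gInner_self_nonneg (hg : ∀ s t, 0 ≤ g s t) (v : Fin n → Fin n → ℝ) : 0 ≤ gInner ω g ρ v v := by
  rw [gInner_eq_inner ω ρ hg]
  exact div_nonneg real_inner_self_nonneg zero_le_two

lemma gInner_sub_self_sub_gInner_sub_self (hg : ∀ s t, 0 ≤ g s t) {u v w : Fin n → Fin n → ℝ}
    (h : gInner ω g ρ u w = gInner ω g ρ v w) :
    gInner ω g ρ (u - w) (u - w) - gInner ω g ρ (v - w) (v - w) =
      gInner ω g ρ u u - gInner ω g ρ v v := by
  simp only [gInner_eq_inner ω ρ hg, map_sub, inner_sub_left, inner_sub_right,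
    real_inner_comm (weightedEmbedding ω g ρ w)] at h ⊢
  linear_combination (-2 : ℝ) * h

lemma exists_gradG_orthogonal (hg : ∀ s t, 0 ≤ g s t) (v : Fin n → Fin n → ℝ) :
    ∃ φ, ∀ ψ, gInner ω g ρ v (gradG ω ψ) = gInner ω g ρ (gradG ω φ) (gradG ω ψ) := by
  set T := weightedEmbedding ω g ρ
  set K := LinearMap.range (T ∘ₗ gradGLinear ω)
  obtain ⟨φ, hφ⟩ : K.starProjection (T v) ∈ K := K.starProjection_apply_mem _
  refine ⟨φ, fun ψ => ?_⟩
  have hψ : T (gradG ω ψ) ∈ K := LinearMap.mem_range_self _ ψ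
  have horth := K.starProjection_inner_eq_zero (T v) _ hψ
  rw [← hφ, inner_sub_left] at horth
  simp only [gInner_eq_inner ω ρ hg]
  exact congrArg (· / 2) (sub_eq_zero.mp horth)

end WeightedInner

section TangentSpaces

variable {ω : Fin n → Fin n → ℝ} {g : ℝ → ℝ → ℝ} (ρ : Fin n → ℝ)

lemma T1_subset_T2 (hω : ∀ i j, ω i j = ω j i) (hgsym : ∀ s t, g s t = g t s)
    (hg : ∀ s t, 0 ≤ g s t) : T1 ω g ρ ⊆ T2 ω g ρ := by
  rintro v ⟨hv, happrox⟩
  refine ⟨hv, fun w hw hdiv => le_of_forall_pos_lt_add fun ε hε => ?_⟩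
  obtain ⟨φ, hφ⟩ := happrox ε hε
  have hpair := (gdiv_eq_gdiv_iff ρ hω hgsym hv hw).mp hdiv.symm φ
  linarith [gInner_sub_self_sub_gInner_sub_self ω ρ hg hpair,
    gInner_self_nonneg ω ρ hg (w - gradG ω φ)]

lemma T2_subset_T1 (hω : ∀ i j, ω i j = ω j i) (hgsym : ∀ s t, g s t = g t s)
    (hg : ∀ s t, 0 ≤ g s t) : T2 ω g ρ ⊆ T1 ω g ρ := by
  rintro v ⟨hv, hmin⟩
  refine ⟨hv, fun ε hε => ?_⟩
  obtain ⟨φ, hφ⟩ := exists_gradG_orthogonal ω ρ hg v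
  have hdiv : gdiv ω g ρ (gradG ω φ) = gdiv ω g ρ v :=
    (gdiv_eq_gdiv_iff ρ hω hgsym (skew_gradG hω φ) hv).mpr fun ψ => (hφ ψ).symm
  have hle := hmin _ (skew_gradG hω φ) hdiv
  have hpyth := gInner_sub_self_sub_gInner_sub_self ω ρ hg (hφ φ)
  rw [sub_self, gInner_zero_left, sub_zero] at hpyth
  exact ⟨φ, by linarith⟩

end TangentSpaces

theorem stmt10_general {n : ℕ} (ω : Fin n → Fin n → ℝ) (g : ℝ → ℝ → ℝ)
    (hωsym : ∀ i j, ω i j = ω j i)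
    (hgsym : ∀ s t, g s t = g t s) (hgnonneg : ∀ s t, 0 ≤ g s t)
    (ρ : Fin n → ℝ) :
    T1 ω g ρ = T2 ω g ρ :=
  (T1_subset_T2 ρ hωsym hgsym hgnonneg).antisymm (T2_subset_T1 ρ hωsym hgsym hgnonneg)

/-- the two definitions of the tangent space coincide: `T¹_ρ P(G) = T²_ρ P(G)`. -/
theorem stmt10 {n : ℕ} (ω : Fin n → Fin n → ℝ) (g : ℝ → ℝ → ℝ)
    (hωsym : ∀ i j, ω i j = ω j i) (hωnonneg : ∀ i j, 0 ≤ ω i j)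
    (hgsym : ∀ s t, g s t = g t s) (hgnonneg : ∀ s t, 0 ≤ g s t)
    (ρ : Fin n → ℝ) (hρ : IsProb ρ) :
    T1 ω g ρ = T2 ω g ρ :=
  stmt10_general ω g hωsym hgsym hgnonneg ρ
end

section
/- With the logarithmic-mean metric tensor g, for every μ ∈ P(G) the initial value problem σ̇ = Aσ, σ(0) = μ admits the unique solution σ^μ(t) = e^{tA}μ, which stays in P(G) for all t ∈ [0,T], and on P₀(G) it satisfies σ̇^μ = div_{σ^μ}(∇_G log σ^μ). -/
/-!
The graph Laplacian `A` has nonnegative off-diagonal entries, so `e^{tA}` is entrywise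
nonnegative for `t ≥ 0`; by symmetry of the weights its columns sum to zero, so the flow
conserves mass and hence preserves `P(G)`. Uniqueness is the uniqueness theorem for ODEs with
the Lipschitz field `σ ↦ Aσ`. On positive densities the identity `g(s,t) (log t - log s) = t - s`
of the logarithmic mean turns `div_σ (∇_G log σ)` into `Aσ` edge by edge.
-/

open Finset MeasureTheory

/-- The logarithmic mean: `g(s,t) = (s-t)/(log s - log t)` for `s ≠ t`, `st ≠ 0`;
`g(s,s) = s`; `g(s,t) = 0` if `st = 0`. -/
noncomputable def logMean (s t : ℝ) : ℝ :=
  if s * t = 0 then 0 else if s = t then s else (s - t) / (Real.log s - Real.log t)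

open scoped Matrix

namespace Matrix

variable {ι : Type*} [Fintype ι]

theorem eq_of_hasDerivAt_mulVec (A : Matrix ι ι ℝ) {f g : ℝ → ι → ℝ}
    (hf : ∀ t, HasDerivAt f (A *ᵥ f t) t) (hg : ∀ t, HasDerivAt g (A *ᵥ g t) t) {t₀ : ℝ}
    (h : f t₀ = g t₀) : f = g :=
  ODE_solution_unique_univ (v := fun _ => (A *ᵥ ·)) (s := fun _ => Set.univ)
    (fun _ => (mulVecLin A).toContinuousLinearMap.lipschitz.lipschitzOnWith)
    (fun t => ⟨hf t, trivial⟩) (fun t => ⟨hg t, trivial⟩) h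

theorem sum_apply_eq_of_hasDerivAt_mulVec {A : Matrix ι ι ℝ} (hA : ∀ v, ∑ i, (A *ᵥ v) i = 0)
    {f : ℝ → ι → ℝ} (hf : ∀ t, HasDerivAt f (A *ᵥ f t) t) (s t : ℝ) :
    ∑ i, f s i = ∑ i, f t i := by
  have hd : ∀ t, HasDerivAt (fun t => ∑ i, f t i) 0 t := fun t => by
    simpa only [hA] using HasDerivAt.fun_sum (u := univ) fun i _ => hasDerivAt_pi.mp (hf t) i
  exact is_const_of_deriv_eq_zero (fun t => (hd t).differentiableAt) (fun t => (hd t).deriv) s t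

variable [DecidableEq ι]

open NormedSpace

section LinftyOpNorm

-- `exp` does not depend on the norm, so any normed-algebra structure on matrices will do here.
attribute [local instance] Matrix.linftyOpNormedRing Matrix.linftyOpNormedAlgebra

theorem exp_apply_nonneg {M : Matrix ι ι ℝ} (hM : ∀ i j, 0 ≤ M i j) (i j : ι) :
    0 ≤ exp M i j := by
  have hsum : HasSum (fun k : ℕ => ((k.factorial : ℝ)⁻¹ • M ^ k) i j) (exp M i j) :=
    Pi.hasSum.mp (Pi.hasSum.mp (exp_series_hasSum_exp' (𝕂 := ℝ) M) i) j
  exact hsum.nonneg fun k => mul_nonneg (by positivity) (pow_apply_nonneg hM k i j)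

theorem hasDerivAt_exp_smul_mulVec (A : Matrix ι ι ℝ) (v : ι → ℝ) (t : ℝ) :
    HasDerivAt (fun t : ℝ => exp (t • A) *ᵥ v) (A *ᵥ (exp (t • A) *ᵥ v)) t := by
  rw [mulVec_mulVec]
  exact ((mulVecBilin ℝ ℝ).flip v).toContinuousLinearMap.hasFDerivAt.comp_hasDerivAt t
    (hasDerivAt_exp_smul_const' A t)

end LinftyOpNorm

/-- Shifting by a scalar matrix `c • 1` makes the entries nonnegative, and
`exp M = e^{-c} exp (M + c • 1)`. -/
theorem exp_apply_nonneg_of_offDiag_nonneg {M : Matrix ι ι ℝ} (hM : ∀ i j, i ≠ j → 0 ≤ M i j)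
    (i j : ι) : 0 ≤ exp M i j := by
  set c := ∑ k, |M k k|
  have hshift : ∀ i j, 0 ≤ (M + c • 1 : Matrix ι ι ℝ) i j := by
    intro i j
    rcases eq_or_ne i j with rfl | hij
    · have : |M i i| ≤ c :=
        single_le_sum (f := fun k => |M k k|) (fun k _ => abs_nonneg _) (mem_univ i)
      simp only [add_apply, smul_apply, one_apply_eq, smul_eq_mul, mul_one]
      linarith [neg_abs_le (M i i)]
    · simpa [hij] using hM i j hij
  have hsplit : exp M = exp (M + c • 1) * diagonal fun _ => exp (-c) := by
    rw [← Pi.exp_def, ← exp_diagonal, ← smul_one_eq_diagonal,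
      ← exp_add_of_commute _ _ ((Commute.one_right _).smul_right _), add_assoc, ← add_smul]
    simp
  rw [hsplit, mul_diagonal, ← Real.exp_eq_exp_ℝ]
  exact mul_nonneg (exp_apply_nonneg hshift i j) (Real.exp_pos _).le

end Matrix

section GraphLaplacian

variable {ι : Type*} [Fintype ι] [DecidableEq ι] {ω : ι → ι → ℝ}

def graphLaplacian (ω : ι → ι → ℝ) : Matrix ι ι ℝ :=
  Matrix.of fun i j => if i = j then -∑ k, ω i k else ω i j

theorem graphLaplacian_eq_sub_diagonal (hdiag : ∀ i, ω i i = 0) :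
    graphLaplacian ω = Matrix.of ω - Matrix.diagonal fun i => ∑ k, ω i k := by
  ext i j
  rcases eq_or_ne i j with rfl | hij <;> simp [graphLaplacian, *]

theorem graphLaplacian_mulVec_apply (hdiag : ∀ i, ω i i = 0) (ρ : ι → ℝ) (i : ι) :
    (graphLaplacian ω *ᵥ ρ) i = ∑ j, ω i j * (ρ j - ρ i) := by
  rw [graphLaplacian_eq_sub_diagonal hdiag, Matrix.sub_mulVec, Pi.sub_apply,
    Matrix.mulVec_diagonal]
  simp [Matrix.mulVec, dotProduct, mul_sub, sum_mul]

theorem sum_graphLaplacian_mulVec (hsymm : ∀ i j, ω i j = ω j i) (hdiag : ∀ i, ω i i = 0)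
    (ρ : ι → ℝ) : ∑ i, (graphLaplacian ω *ᵥ ρ) i = 0 := by
  simp only [graphLaplacian_mulVec_apply hdiag, mul_sub, sum_sub_distrib]
  rw [sum_comm, sub_eq_zero]
  simp only [hsymm]

theorem graphLaplacian_apply_nonneg_of_ne (hnonneg : ∀ i j, 0 ≤ ω i j) {i j : ι} (hij : i ≠ j) :
    0 ≤ graphLaplacian ω i j := by
  simpa [graphLaplacian, hij] using hnonneg i j

end GraphLaplacian

theorem logMean_mul_log_sub_log {s t : ℝ} (hs : 0 < s) (ht : 0 < t) :
    logMean s t * (Real.log t - Real.log s) = t - s := by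
  rcases eq_or_ne s t with rfl | hst
  · simp
  have hlog : Real.log s - Real.log t ≠ 0 :=
    sub_ne_zero.mpr fun h => hst (Real.log_injOn_pos hs ht h)
  rw [logMean, if_neg (by positivity), if_neg hst]
  field_simp
  ring

theorem graphLaplacian_mulVec_eq_gdiv_logMean {n : ℕ} {ω : Fin n → Fin n → ℝ}
    (hsymm : ∀ i j, ω i j = ω j i) (hnonneg : ∀ i j, 0 ≤ ω i j) (hdiag : ∀ i, ω i i = 0)
    {ρ : Fin n → ℝ} (hρ : ∀ i, 0 < ρ i) :
    graphLaplacian ω *ᵥ ρ = gdiv ω logMean ρ (gradG ω fun i => Real.log (ρ i)) := by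
  funext i
  rw [graphLaplacian_mulVec_apply hdiag]
  refine sum_congr rfl fun j _ => ?_
  rw [gradG, hsymm j i, ← logMean_mul_log_sub_log (hρ i) (hρ j)]
  linear_combination -(logMean (ρ i) (ρ j) * (Real.log (ρ j) - Real.log (ρ i))) *
    Real.mul_self_sqrt (hnonneg i j)

theorem stmt14_general {n : ℕ} (ω : Fin n → Fin n → ℝ)
    (hωsym : ∀ i j, ω i j = ω j i) (hωnonneg : ∀ i j, 0 ≤ ω i j)
    (hdiag : ∀ i, ω i i = 0)
    (A : Matrix (Fin n) (Fin n) ℝ)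
    (hA : ∀ i j, A i j = if i = j then -(∑ k, ω i k) else ω i j)
    (T : ℝ)
    (μ : Fin n → ℝ) (hμ : IsProb μ)
    (σ : ℝ → Fin n → ℝ) (hσ : ∀ t, σ t = (NormedSpace.exp (t • A)).mulVec μ) :
    σ 0 = μ ∧
    (∀ t : ℝ, HasDerivAt σ (A.mulVec (σ t)) t) ∧
    (∀ t ∈ Set.Icc (0:ℝ) T, IsProb (σ t)) ∧
    (∀ τ : ℝ → Fin n → ℝ,
      τ 0 = μ → (∀ t : ℝ, HasDerivAt τ (A.mulVec (τ t)) t) → ∀ t : ℝ, τ t = σ t) ∧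
    (∀ t : ℝ, (∀ i, 0 < σ t i) →
      A.mulVec (σ t)
        = gdiv ω logMean (σ t) (gradG ω (fun i => Real.log (σ t i)))) := by
  obtain rfl : A = graphLaplacian ω := Matrix.ext hA
  obtain rfl : σ = fun t => NormedSpace.exp (t • graphLaplacian ω) *ᵥ μ := funext hσ
  have hσ' := Matrix.hasDerivAt_exp_smul_mulVec (graphLaplacian ω) μ
  have hσ0 : NormedSpace.exp ((0 : ℝ) • graphLaplacian ω) *ᵥ μ = μ := by simp
  refine ⟨hσ0, hσ', fun t ht => ⟨fun i => ?_, ?_⟩,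
    fun τ hτ0 hτ => congrFun (Matrix.eq_of_hasDerivAt_mulVec _ hτ hσ' (hτ0.trans hσ0.symm)),
    fun t hpos => graphLaplacian_mulVec_eq_gdiv_logMean hωsym hωnonneg hdiag hpos⟩
  · dsimp only
    rw [Matrix.mulVec, dotProduct]
    refine sum_nonneg fun j _ => mul_nonneg ?_ (hμ.1 j)
    refine Matrix.exp_apply_nonneg_of_offDiag_nonneg (fun i j hij => ?_) i j
    simpa using mul_nonneg ht.1 (graphLaplacian_apply_nonneg_of_ne hωnonneg hij)
  · rw [Matrix.sum_apply_eq_of_hasDerivAt_mulVec (sum_graphLaplacian_mulVec hωsym hdiag) hσ' t 0,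
      hσ0, hμ.2]

/-- `σ^μ(t) = e^{tA}μ` is the unique solution of `σ̇ = Aσ`, `σ(0) = μ`;
it stays in `P(G)`, and on `P₀(G)` it solves `σ̇ = div_σ(∇_G log σ)`. -/
theorem stmt14 {n : ℕ} (ω : Fin n → Fin n → ℝ)
    (hωsym : ∀ i j, ω i j = ω j i) (hωnonneg : ∀ i j, 0 ≤ ω i j)
    (hdiag : ∀ i, ω i i = 0)
    (hconn : ∀ i j : Fin n, Relation.ReflTransGen (fun a b => ω a b ≠ 0) i j)
    (A : Matrix (Fin n) (Fin n) ℝ)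
    (hA : ∀ i j, A i j = if i = j then -(∑ k, ω i k) else ω i j)
    (T : ℝ) (hT : 0 < T)
    (μ : Fin n → ℝ) (hμ : IsProb μ)
    (σ : ℝ → Fin n → ℝ) (hσ : ∀ t, σ t = (NormedSpace.exp (t • A)).mulVec μ) :
    σ 0 = μ ∧
    (∀ t : ℝ, HasDerivAt σ (A.mulVec (σ t)) t) ∧
    (∀ t ∈ Set.Icc (0:ℝ) T, IsProb (σ t)) ∧
    (∀ τ : ℝ → Fin n → ℝ,
      τ 0 = μ → (∀ t : ℝ, HasDerivAt τ (A.mulVec (τ t)) t) → ∀ t : ℝ, τ t = σ t) ∧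
    (∀ t : ℝ, (∀ i, 0 < σ t i) →
      A.mulVec (σ t)
        = gdiv ω logMean (σ t) (gradG ω (fun i => Real.log (σ t i)))) :=
  stmt14_general ω hωsym hωnonneg hdiag A hA T μ hμ σ hσ
end
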